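/- arXiv:0809.0466 — 4 statements merged into one kernel-verified Lean document; each statement's English description precedes it below -/
import Mathlib

section
/- For unit complex numbers α, β, the representations V_α and V_β of G = ℤ ⋊ ℤ/2 are isomorphic (there exists a ℂ-linear isomorphism of ℂ² intertwining the two G-actions) if and only if α = β or α = β⁻¹. -/
/-!
An isomorphism `V_α ≅ V_β` conjugates the action of `t`, so the eigenvalues `α, α⁻¹` of `t` on
`V_α` are eigenvalues of `diag(β, β⁻¹)`. Conversely, `V_α = V_β` when `α = β`; when `α = β⁻¹`,
`V_β` is `V_α` precomposed with conjugation by `s` (which inverts `t`), and then `ρ_α(s)` is an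
isomorphism `V_α ≅ V_β`.
-/

/-- The inversion automorphism of `Multiplicative ℤ`, i.e. negation on `ℤ`. -/
def negAut : MulAut (Multiplicative ℤ) := MulEquiv.inv (Multiplicative ℤ)

lemma negAut_sq : negAut ^ 2 = 1 := by
  ext x
  show negAut (negAut x) = x
  exact inv_inv x

/-- The action of `ℤ/2` on `ℤ` in which the nontrivial element acts by negation. -/
def dihedralAction : Multiplicative (ZMod 2) →* MulAut (Multiplicative ℤ) where
  toFun ε := negAut ^ (ε.toAdd.val)
  map_one' := by
    show negAut ^ (0 : ZMod 2).val = 1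
    simp
  map_mul' x y := by
    show negAut ^ (x.toAdd + y.toAdd).val = _
    rw [ZMod.val_add, ← pow_eq_pow_mod _ negAut_sq, pow_add]

/-- The infinite dihedral group `ℤ ⋊ ℤ/2`, with the nontrivial element of `ℤ/2`
acting on `ℤ` by negation. -/
def DihedralZ : Type := SemidirectProduct (Multiplicative ℤ) (Multiplicative (ZMod 2)) dihedralAction


instance : Group DihedralZ := inferInstanceAs (Group (SemidirectProduct _ _ _))

/-- The generator `t = (1, 0)` of `ℤ ⋊ ℤ/2`. -/
def tGen : DihedralZ := ⟨Multiplicative.ofAdd (1 : ℤ), 1⟩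

/-- The generator `s = (0, 1)` of `ℤ ⋊ ℤ/2`. -/
def sGen : DihedralZ := ⟨1, Multiplicative.ofAdd (1 : ZMod 2)⟩


open Matrix Module

section Eigenvalues

variable {R V W : Type*} [CommRing R] [AddCommGroup V] [Module R V] [AddCommGroup W] [Module R W]

theorem Module.End.HasEigenvalue.of_linearEquiv {f : End R V} {g : End R W} {μ : R}
    (e : V ≃ₗ[R] W) (h : ∀ v, e (f v) = g (e v)) (hμ : f.HasEigenvalue μ) :
    g.HasEigenvalue μ := by
  obtain ⟨v, hv⟩ := hμ.exists_hasEigenvector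
  refine End.hasEigenvalue_of_hasEigenvector (x := e v) ⟨?_, by simpa using hv.2⟩
  rw [End.mem_eigenspace_iff, ← h, hv.apply_eq_smul, map_smul]

theorem Matrix.exists_diagonal_eq_of_intertwines {n : Type*} [Fintype n] [DecidableEq n]
    [IsDomain R] {d d' : n → R} (e : (n → R) ≃ₗ[R] (n → R))
    (h : ∀ v, e (diagonal d *ᵥ v) = diagonal d' *ᵥ e v) (i : n) : ∃ j, d' j = d i :=
  (hasEigenvalue_toLin'_diagonal_iff d').1 <|
    ((hasEigenvalue_toLin'_diagonal_iff d).2 ⟨i, rfl⟩).of_linearEquiv e h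

end Eigenvalues

theorem Matrix.UnitaryGroup.toLinearEquiv_mulVec_conj {G n R : Type*} [Group G] [Fintype n]
    [DecidableEq n] [CommRing R] [StarRing R] (ρ : G →* unitaryGroup n R) (h g : G)
    (v : n → R) :
    UnitaryGroup.toLinearEquiv (ρ h) ((ρ g : Matrix n n R) *ᵥ v) =
      (ρ (h * g * h⁻¹) : Matrix n n R) *ᵥ UnitaryGroup.toLinearEquiv (ρ h) v := by
  show (ρ h : Matrix n n R) *ᵥ ((ρ g : Matrix n n R) *ᵥ v) =
    (ρ (h * g * h⁻¹) : Matrix n n R) *ᵥ ((ρ h : Matrix n n R) *ᵥ v)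
  simp only [mulVec_mulVec, ← UnitaryGroup.mul_val, ← map_mul, inv_mul_cancel_right]

namespace DihedralZ

theorem hom_ext {M : Type*} [Group M] {f g : DihedralZ →* M} (ht : f tGen = g tGen)
    (hs : f sGen = g sGen) : f = g :=
  SemidirectProduct.hom_ext (MonoidHom.ext_mint ht) <| MonoidHom.ext fun ε => by
    fin_cases ε
    · exact (map_one _).trans (map_one _).symm
    · exact hs

theorem sGen_inv : sGen⁻¹ = sGen :=
  rfl

end DihedralZ

theorem Valpha_iso_iff_general (α β : ℂ)
    (ρα ρβ : DihedralZ →* Matrix.unitaryGroup (Fin 2) ℂ)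
    (hαt : (ρα tGen : Matrix (Fin 2) (Fin 2) ℂ) = !![α, 0; 0, α⁻¹])
    (hαs : (ρα sGen : Matrix (Fin 2) (Fin 2) ℂ) = !![0, 1; 1, 0])
    (hβt : (ρβ tGen : Matrix (Fin 2) (Fin 2) ℂ) = !![β, 0; 0, β⁻¹])
    (hβs : (ρβ sGen : Matrix (Fin 2) (Fin 2) ℂ) = !![0, 1; 1, 0]) :
    (∃ e : (Fin 2 → ℂ) ≃ₗ[ℂ] (Fin 2 → ℂ),
        ∀ (g : DihedralZ) (v : Fin 2 → ℂ),
          e (Matrix.mulVec (ρα g : Matrix (Fin 2) (Fin 2) ℂ) v) =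
            Matrix.mulVec (ρβ g : Matrix (Fin 2) (Fin 2) ℂ) (e v)) ↔
      (α = β ∨ α = β⁻¹) := by
  constructor
  · rintro ⟨e, he⟩
    have ht : ∀ v, e (diagonal ![α, α⁻¹] *ᵥ v) = diagonal ![β, β⁻¹] *ᵥ e v := by
      simpa only [diagonal_vec2, hαt, hβt] using he tGen
    obtain ⟨j, hj⟩ := exists_diagonal_eq_of_intertwines e ht 0
    fin_cases j
    · exact Or.inl hj.symm
    · exact Or.inr (by simpa using hj.symm)
  · rintro (rfl | rfl)
    · have hρ : ρα = ρβ := DihedralZ.hom_ext (Subtype.ext (hαt.trans hβt.symm))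
        (Subtype.ext (hαs.trans hβs.symm))
      exact ⟨LinearEquiv.refl ℂ _, fun g v => by rw [hρ]; rfl⟩
    · have hρ : ρβ = ρα.comp (MulAut.conj sGen).toMonoidHom := by
        refine DihedralZ.hom_ext (Subtype.ext ?_) (Subtype.ext ?_)
        · simp [DihedralZ.sGen_inv, hαt, hαs, hβt]
        · simp [hαs, hβs]
      refine ⟨UnitaryGroup.toLinearEquiv (ρα sGen), fun g v => ?_⟩
      rw [hρ]
      exact UnitaryGroup.toLinearEquiv_mulVec_conj ρα sGen g v

/-- For unit complex numbers `α, β`, the representations `V_α` and `V_β` of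
`G = ℤ ⋊ ℤ/2` (where `V_α` sends `t` to `diag(α, α⁻¹)` and `s` to `[[0,1],[1,0]]`)
are isomorphic if and only if `α = β` or `α = β⁻¹`. -/
theorem Valpha_iso_iff (α β : ℂ) (hα : ‖α‖ = 1) (hβ : ‖β‖ = 1)
    (ρα ρβ : DihedralZ →* Matrix.unitaryGroup (Fin 2) ℂ)
    (hαt : (ρα tGen : Matrix (Fin 2) (Fin 2) ℂ) = !![α, 0; 0, α⁻¹])
    (hαs : (ρα sGen : Matrix (Fin 2) (Fin 2) ℂ) = !![0, 1; 1, 0])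
    (hβt : (ρβ tGen : Matrix (Fin 2) (Fin 2) ℂ) = !![β, 0; 0, β⁻¹])
    (hβs : (ρβ sGen : Matrix (Fin 2) (Fin 2) ℂ) = !![0, 1; 1, 0]) :
    (∃ e : (Fin 2 → ℂ) ≃ₗ[ℂ] (Fin 2 → ℂ),
        ∀ (g : DihedralZ) (v : Fin 2 → ℂ),
          e (Matrix.mulVec (ρα g : Matrix (Fin 2) (Fin 2) ℂ) v) =
            Matrix.mulVec (ρβ g : Matrix (Fin 2) (Fin 2) ℂ) (e v)) ↔
      (α = β ∨ α = β⁻¹) :=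
  Valpha_iso_iff_general α β ρα ρβ hαt hαs hβt hβs
end

section
/- For a unit complex number α, the representation V_α of G = ℤ ⋊ ℤ/2 is irreducible (the only subspaces of ℂ² invariant under the action of all elements of G are 0 and ℂ²) if and only if α ≠ 1 and α ≠ −1. -/
/-! If `α ≠ ±1`, then `t` acts diagonally with distinct eigenvalues `α ≠ α⁻¹`, so a nonzero
invariant subspace contains a coordinate vector; `s` swaps the two coordinate vectors, so it
contains both. If `α = ±1`, then `t` acts by a scalar, so every element of `G` commutes with `s`
and the `1`-eigenspace of `s`, the line through `(1, 1)`, is invariant. -/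

open Matrix

lemma map_mulVecLin_eigenspace_le {R n : Type*} [CommRing R] [Fintype n] {A B : Matrix n n R}
    (h : Commute A B) (μ : R) :
    (Module.End.eigenspace A.mulVecLin μ).map B.mulVecLin ≤
      Module.End.eigenspace A.mulVecLin μ := by
  rintro _ ⟨v, hv, rfl⟩
  rw [SetLike.mem_coe, Module.End.mem_eigenspace_iff, mulVecLin_apply] at hv
  rw [Module.End.mem_eigenspace_iff, mulVecLin_apply, mulVecLin_apply,
    mulVec_mulVec, h.eq, ← mulVec_mulVec, hv, mulVec_smul]

section TwoByTwo

variable {K : Type*} [Field K]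

lemma swap_fin_two_mulVec (x y : K) : !![0, 1; 1, 0] *ᵥ ![x, y] = ![y, x] := by
  rw [mulVec_fin_two]; simp

lemma eq_bot_or_eq_top_of_invariant_diag_swap {a b : K} (hab : a ≠ b)
    {p : Submodule K (Fin 2 → K)} (hD : p.map (mulVecLin !![a, 0; 0, b]) ≤ p)
    (hS : p.map (mulVecLin !![0, 1; 1, 0]) ≤ p) : p = ⊥ ∨ p = ⊤ := by
  have swap_mem {x y : K} (h : ![x, y] ∈ p) : ![y, x] ∈ p := by
    simpa only [mulVecLin_apply, swap_fin_two_mulVec] using hS (Submodule.mem_map_of_mem h)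
  refine or_iff_not_imp_left.2 fun hp => ?_
  obtain ⟨v, hv, hv0⟩ := (Submodule.ne_bot_iff p).1 hp
  have hDv := hD (Submodule.mem_map_of_mem hv)
  rw [mulVecLin_apply, mulVec_fin_two] at hDv
  have h0 : ((a - b) * v 0) • ![1, 0] ∈ p := by
    convert p.sub_mem hDv (p.smul_mem b hv) using 1
    ext i; fin_cases i <;> simp; ring
  have h1 : ((b - a) * v 1) • ![0, 1] ∈ p := by
    convert p.sub_mem hDv (p.smul_mem a hv) using 1
    ext i; fin_cases i <;> simp; ring
  have e0 : ![1, 0] ∈ p := by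
    obtain h | h : v 0 ≠ 0 ∨ v 1 ≠ 0 := by
      by_contra! h
      exact hv0 (funext (Fin.forall_fin_two.2 h))
    · exact (p.smul_mem_iff (mul_ne_zero (sub_ne_zero.2 hab) h)).1 h0
    · exact swap_mem ((p.smul_mem_iff (mul_ne_zero (sub_ne_zero.2 hab.symm) h)).1 h1)
  refine Submodule.eq_top_iff'.2 fun u => ?_
  have hu : u = u 0 • ![1, 0] + u 1 • ![0, 1] := by
    ext i; fin_cases i <;> simp
  rw [hu]
  exact p.add_mem (p.smul_mem _ e0) (p.smul_mem _ (swap_mem e0))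

lemma exists_invariant_ne_bot_ne_top_of_commute_swap {ι : Type*}
    (M : ι → Matrix (Fin 2) (Fin 2) K) (h : ∀ i, Commute !![0, 1; 1, 0] (M i)) :
    ∃ p : Submodule K (Fin 2 → K), (∀ i, p.map (M i).mulVecLin ≤ p) ∧ p ≠ ⊥ ∧ p ≠ ⊤ := by
  refine ⟨Module.End.eigenspace (mulVecLin !![0, 1; 1, 0]) 1,
    fun i => map_mulVecLin_eigenspace_le (h i) 1, ?_, fun htop => ?_⟩
  · refine (Submodule.ne_bot_iff _).2 ⟨![1, 1], ?_, by simp⟩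
    rw [Module.End.mem_eigenspace_iff, mulVecLin_apply, swap_fin_two_mulVec, one_smul]
  · have : ![1, 0] ∈ Module.End.eigenspace (mulVecLin !![(0 : K), 1; 1, 0]) 1 :=
      htop ▸ Submodule.mem_top
    rw [Module.End.mem_eigenspace_iff, mulVecLin_apply, swap_fin_two_mulVec, one_smul] at this
    simpa using congrFun this 0

end TwoByTwo

namespace DihedralZ

lemma inl_ofAdd_eq_tGen_zpow (n : ℤ) :
    (SemidirectProduct.inl (Multiplicative.ofAdd n) : DihedralZ) = tGen ^ n := by
  show _ = (SemidirectProduct.inl (Multiplicative.ofAdd 1) :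
    Multiplicative ℤ ⋊[dihedralAction] Multiplicative (ZMod 2)) ^ n
  rw [← map_zpow, ← ofAdd_zsmul, smul_eq_mul, mul_one]

lemma closure_tGen_sGen : Subgroup.closure {tGen, sGen} = ⊤ := by
  refine eq_top_iff.2 fun g _ => ?_
  rw [← SemidirectProduct.inl_left_mul_inr_right g]
  refine mul_mem ?_ ?_
  · rw [← ofAdd_toAdd g.left, inl_ofAdd_eq_tGen_zpow]
    exact zpow_mem (Subgroup.subset_closure (by simp)) _
  · obtain h | h : g.right = 1 ∨ g.right = Multiplicative.ofAdd 1 := by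
      generalize g.right = r; revert r; decide
    · rw [h, map_one]; exact one_mem _
    · rw [h]; exact Subgroup.subset_closure (Or.inr rfl)

lemma commute_sGen_apply {M : Type*} [Group M] (f : DihedralZ →* M)
    (h : Commute (f sGen) (f tGen)) (g : DihedralZ) : Commute (f sGen) (f g) := by
  have hle : Subgroup.closure {tGen, sGen} ≤ (Subgroup.centralizer {f sGen}).comap f := by
    rw [Subgroup.closure_le]
    rintro _ (rfl | rfl) <;> simp [Subgroup.mem_centralizer_singleton_iff, h.eq]
  have hg : g ∈ Subgroup.closure {tGen, sGen} := closure_tGen_sGen ▸ Subgroup.mem_top g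
  exact (Subgroup.mem_centralizer_singleton_iff.1 (hle hg)).symm

end DihedralZ

/-- For a unit complex number `α`, the representation `V_α` of `G = ℤ ⋊ ℤ/2`
(sending `t` to `diag(α, α⁻¹)` and `s` to `[[0,1],[1,0]]`) is irreducible if and
only if `α ≠ 1` and `α ≠ -1`. -/
theorem Valpha_irreducible_iff (α : ℂ) (hα : ‖α‖ = 1)
    (ρ : DihedralZ →* Matrix.unitaryGroup (Fin 2) ℂ)
    (ht : (ρ tGen : Matrix (Fin 2) (Fin 2) ℂ) = !![α, 0; 0, α⁻¹])
    (hs : (ρ sGen : Matrix (Fin 2) (Fin 2) ℂ) = !![0, 1; 1, 0]) :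
    (∀ p : Submodule ℂ (Fin 2 → ℂ),
        (∀ g : DihedralZ, p.map (Matrix.mulVecLin (ρ g : Matrix (Fin 2) (Fin 2) ℂ)) ≤ p) →
          p = ⊥ ∨ p = ⊤) ↔
      (α ≠ 1 ∧ α ≠ -1) := by
  have hα0 : α ≠ 0 := norm_ne_zero_iff.1 (hα ▸ one_ne_zero)
  have inv_eq_self : α⁻¹ = α ↔ α = 1 ∨ α = -1 := by
    rw [inv_eq_self₀]; tauto
  constructor
  · intro hirr
    by_contra hpm
    have hscalar : α⁻¹ = α := inv_eq_self.2 (by tauto)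
    have hst : Commute (ρ sGen) (ρ tGen) := Subtype.ext <| by
      simp [ht, hs, hscalar]
    have hcomm (g : DihedralZ) : Commute !![0, 1; 1, 0] (ρ g : Matrix (Fin 2) (Fin 2) ℂ) :=
      hs ▸ (DihedralZ.commute_sGen_apply ρ hst g).map (unitaryGroup (Fin 2) ℂ).subtype
    obtain ⟨p, hp, hbot, htop⟩ := exists_invariant_ne_bot_ne_top_of_commute_swap _ hcomm
    exact (hirr p hp).elim hbot htop
  · rintro hpm p hp
    exact eq_bot_or_eq_top_of_invariant_diag_swap (Ne.symm (mt inv_eq_self.1 (by tauto)))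
      (ht ▸ hp tGen) (hs ▸ hp sGen)
end

section
/- Every irreducible unitary representation of H = ℤ² ⋊ ℤ/4 on a nonzero finite-dimensional complex inner product space has dimension 1, 2, or 4. -/
/-- The additive automorphism `(a, b) ↦ (-b, a)` of `ℤ²`, i.e. the matrix
`[[0, -1], [1, 0]]`. -/
def rotAdd : (ℤ × ℤ) ≃+ (ℤ × ℤ) where
  toFun p := (-p.2, p.1)
  invFun p := (p.2, -p.1)
  left_inv p := by simp
  right_inv p := by simp
  map_add' p q := by simp [Prod.ext_iff]; ring

/-- The automorphism `(a, b) ↦ (-b, a)` of `ℤ²`, written multiplicatively. -/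
def rotAut : MulAut (Multiplicative (ℤ × ℤ)) := AddEquiv.toMultiplicative rotAdd

lemma rotAut_pow_four : rotAut ^ 4 = 1 := by
  refine MulEquiv.ext fun x => ?_
  show rotAut (rotAut (rotAut (rotAut x))) = x
  simp [rotAut, rotAdd, AddEquiv.toMultiplicative]

/-- The action of `ℤ/4` on `ℤ²` in which a fixed generator acts by the matrix
`[[0, -1], [1, 0]]`. -/
def rotAction : Multiplicative (ZMod 4) →* MulAut (Multiplicative (ℤ × ℤ)) where
  toFun ε := rotAut ^ (ε.toAdd.val)
  map_one' := by
    show rotAut ^ (0 : ZMod 4).val = 1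
    simp
  map_mul' x y := by
    show rotAut ^ (x.toAdd + y.toAdd).val = _
    rw [ZMod.val_add, ← pow_eq_pow_mod _ rotAut_pow_four, pow_add]

/-- The group `H = ℤ² ⋊ ℤ/4`, with a generator of `ℤ/4` acting on `ℤ²` by the
matrix `[[0, -1], [1, 0]]`. -/
def Hgroup : Type :=
  SemidirectProduct (Multiplicative (ℤ × ℤ)) (Multiplicative (ZMod 4)) rotAction

instance : Group Hgroup := inferInstanceAs (Group (SemidirectProduct _ _ _))

/-!
The translations `ℤ²` commute, so they have a common eigenvector `v`, with eigenvalue function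
`χ`, and the rotation `s` maps a vector of weight `χ` to one of weight `χ ∘ s⁻¹`. By
irreducibility `W` is spanned by `v, s v, s² v, s³ v`, so `dim W ≤ 4`. If `s²` fixes `χ`, then `s²`
preserves the `χ`-weight space, so `v` can be chosen to be an eigenvector of `s²` as well, and then
`W` is spanned by `v` and `s v`. Otherwise the four weights are pairwise distinct (a nontrivial
subgroup of `ℤ/4` contains `2`), so the four vectors are linearly independent and `dim W = 4`.
-/

open Module Submodule

namespace Module.End

variable {ι K V : Type*} [Field K] [AddCommGroup V] [Module K V]

theorem exists_eigenvector_mem_of_mapsTo [IsAlgClosed K] [FiniteDimensional K V] (f : End K V)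
    {E : Submodule K V} (hE : E ≠ ⊥) (hf : ∀ x ∈ E, f x ∈ E) :
    ∃ μ : K, ∃ v ∈ E, v ≠ 0 ∧ f v = μ • v := by
  have : Nontrivial E := Submodule.nontrivial_iff_ne_bot.mpr hE
  obtain ⟨μ, hμ⟩ := exists_eigenvalue (f.restrict hf)
  obtain ⟨v, hv⟩ := hμ.exists_hasEigenvector
  exact ⟨μ, v, v.2, by simpa using hv.2, congrArg Subtype.val hv.apply_eq_smul⟩

theorem exists_common_eigenvector_mem [IsAlgClosed K] [FiniteDimensional K V]
    (f : ι → End K V) (hf : ∀ i j, Commute (f i) (f j)) {E : Submodule K V} (hE : E ≠ ⊥)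
    (hfE : ∀ i, ∀ x ∈ E, f i x ∈ E) :
    ∃ χ : ι → K, ∃ v ∈ E, v ≠ 0 ∧ ∀ i, f i v = χ i • v := by
  induction hn : finrank K E using Nat.strong_induction_on generalizing E with
  | _ n ih =>
  by_cases hscalar : ∀ i, ∃ μ : K, ∀ x ∈ E, f i x = μ • x
  · choose χ hχ using hscalar
    obtain ⟨v, hvE, hv0⟩ := Submodule.exists_mem_ne_zero_of_ne_bot hE
    exact ⟨χ, v, hvE, hv0, fun i => hχ i v hvE⟩
  push Not at hscalar
  obtain ⟨i, hi⟩ := hscalar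
  obtain ⟨μ, u, huE, hu0, hu⟩ := (f i).exists_eigenvector_mem_of_mapsTo hE (hfE i)
  set E' := E ⊓ (f i).eigenspace μ
  have hE'E : E' < E := by
    refine inf_le_left.lt_of_ne fun h => ?_
    obtain ⟨x, hxE, hx⟩ := hi μ
    exact hx (mem_eigenspace_iff.mp (h.ge hxE).2)
  have hE' : E' ≠ ⊥ :=
    (Submodule.ne_bot_iff _).mpr ⟨u, ⟨huE, mem_eigenspace_iff.mpr hu⟩, hu0⟩
  have hfE' : ∀ j, ∀ x ∈ E', f j x ∈ E' := fun j x hx =>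
    ⟨hfE j x hx.1, mapsTo_genEigenspace_of_comm (hf i j) μ 1 hx.2⟩
  obtain ⟨χ, v, hvE', hv0, hv⟩ :=
    ih _ (hn ▸ Submodule.finrank_lt_finrank_of_lt hE'E) hE' hfE' rfl
  exact ⟨χ, v, hvE'.1, hv0, hv⟩

theorem linearIndependent_of_forall_apply_eq_smul {κ : Type*} (f : ι → End K V)
    (hf : ∀ i j, Commute (f i) (f j)) {χ : κ → ι → K} (hχ : Function.Injective χ)
    {v : κ → V} (hv : ∀ k i, f i (v k) = χ k i • v k) (hv0 : ∀ k, v k ≠ 0) :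
    LinearIndependent K v := by
  have hindep := (independent_iInf_maxGenEigenspace_of_forall_mapsTo f
    fun i j μ => mapsTo_maxGenEigenspace_of_comm (hf j i) μ).comp hχ
  refine hindep.linearIndependent _ (fun k => ?_) hv0
  exact (Submodule.mem_iInf _).mpr fun i =>
    eigenspace_le_maxGenEigenspace (mem_eigenspace_iff.mpr (hv k i))

end Module.End

namespace Representation

open SemidirectProduct

section SemidirectProduct

variable {k V N G : Type*} [Field k] [AddCommGroup V] [Module k V] [Group N] [Group G]
  {φ : G →* MulAut N} (π : Representation k (N ⋊[φ] G) V)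

def inlWeightSpace (χ : N → k) : Submodule k V :=
  ⨅ n, Module.End.eigenspace (π (inl n)) (χ n)

def inrOrbitSpan (v : V) : Submodule k V :=
  span k (Set.range fun g => π (inr g) v)

variable {π}

theorem mem_inlWeightSpace_iff {χ : N → k} {v : V} :
    v ∈ π.inlWeightSpace χ ↔ ∀ n, π (inl n) v = χ n • v := by
  simp [inlWeightSpace]

theorem inr_apply_mem_inlWeightSpace {χ : N → k} {v : V} (hv : v ∈ π.inlWeightSpace χ) (g : G) :
    π (inr g) v ∈ π.inlWeightSpace (fun n => χ ((φ g)⁻¹ n)) := by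
  rw [mem_inlWeightSpace_iff] at hv ⊢
  intro n
  have hconj : (inl n * inr g : N ⋊[φ] G) = inr g * inl ((φ g)⁻¹ n) := by
    rw [inl_aut_inv, ← mul_assoc, ← mul_assoc, ← map_mul, mul_inv_cancel, map_one, one_mul]
  rw [← Module.End.mul_apply, ← map_mul, hconj, map_mul, Module.End.mul_apply, hv, map_smul]

theorem inr_apply_mem_inlWeightSpace_of_forall_eq {χ : N → k} {v : V} {g : G}
    (hg : ∀ n, χ (φ g n) = χ n) (hv : v ∈ π.inlWeightSpace χ) :
    π (inr g) v ∈ π.inlWeightSpace χ := by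
  convert inr_apply_mem_inlWeightSpace hv g using 2
  funext n
  simpa using hg ((φ g)⁻¹ n)

theorem inr_apply_ne_zero {v : V} (hv : v ≠ 0) (g : G) : π (inr g) v ≠ 0 :=
  (map_ne_zero_iff _ (π.apply_bijective _).injective).mpr hv

theorem self_mem_inrOrbitSpan (v : V) : v ∈ π.inrOrbitSpan v :=
  subset_span ⟨1, by simp⟩

theorem inrOrbitSpan_le_comap {χ : N → k} {v : V} (hv : v ∈ π.inlWeightSpace χ)
    (x : N ⋊[φ] G) : π.inrOrbitSpan v ≤ (π.inrOrbitSpan v).comap (π x) := by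
  refine span_le.mpr ?_
  rintro - ⟨g, rfl⟩
  have hx : π x (π (inr g) v) = π (inl x.left) (π (inr (x.right * g)) v) := by
    conv_lhs => rw [← inl_left_mul_inr_right x]
    simp only [map_mul, Module.End.mul_apply]
  rw [SetLike.mem_coe, mem_comap, hx,
    mem_inlWeightSpace_iff.mp (inr_apply_mem_inlWeightSpace hv _)]
  exact smul_mem _ _ (subset_span ⟨_, rfl⟩)

end SemidirectProduct

section CommGroup

variable {k V N G : Type*} [Field k] [AddCommGroup V] [Module k V] [CommGroup N] [Group G]
  {φ : G →* MulAut N} {π : Representation k (N ⋊[φ] G) V}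

theorem commute_inl (m n : N) : Commute (π (inl m)) (π (inl n)) := by
  rw [Commute, SemiconjBy, ← map_mul, ← map_mul, ← map_mul, ← map_mul, mul_comm]

variable (π) in
theorem exists_inlWeightSpace_ne_bot [IsAlgClosed k] [FiniteDimensional k V] [Nontrivial V] :
    ∃ χ : N → k, π.inlWeightSpace χ ≠ ⊥ := by
  obtain ⟨χ, v, -, hv0, hv⟩ := Module.End.exists_common_eigenvector_mem (fun n => π (inl n))
    commute_inl top_ne_bot fun _ _ _ => mem_top
  exact ⟨χ, (Submodule.ne_bot_iff _).mpr ⟨v, mem_inlWeightSpace_iff.mpr hv, hv0⟩⟩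

theorem linearIndependent_inr_apply {χ : N → k} {v : V} (hv : v ∈ π.inlWeightSpace χ)
    (hv0 : v ≠ 0) (hχ : Function.Injective fun g n => χ ((φ g)⁻¹ n)) :
    LinearIndependent k fun g => π (inr g) v :=
  Module.End.linearIndependent_of_forall_apply_eq_smul _ commute_inl hχ
    (fun g => mem_inlWeightSpace_iff.mp (inr_apply_mem_inlWeightSpace hv g))
    (inr_apply_ne_zero hv0)

end CommGroup

end Representation

section ZMod4

open Multiplicative

theorem Representation.apply_mem_span_pair_of_apply_two_eq_smul {k V : Type*} [Field k]
    [AddCommGroup V] [Module k V] (τ : Representation k (Multiplicative (ZMod 4)) V) {u : V}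
    {c : k} (hu : τ (ofAdd 2) u = c • u) (g : Multiplicative (ZMod 4)) :
    τ g u ∈ span k (Set.range ![u, τ (ofAdd 1) u]) := by
  have hu0 : u ∈ span k (Set.range ![u, τ (ofAdd 1) u]) := subset_span ⟨0, rfl⟩
  have hu1 : τ (ofAdd 1) u ∈ span k (Set.range ![u, τ (ofAdd 1) u]) := subset_span ⟨1, rfl⟩
  suffices ∀ a : ZMod 4, τ (ofAdd a) u ∈ span k (Set.range ![u, τ (ofAdd 1) u]) from this g.toAdd
  intro a
  fin_cases a
  · show τ (ofAdd 0) u ∈ _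
    rwa [ofAdd_zero, τ.map_one, Module.End.one_apply]
  · exact hu1
  · exact hu ▸ smul_mem _ _ hu0
  · show τ (ofAdd 1 * ofAdd 2) u ∈ _
    rw [map_mul, Module.End.mul_apply, hu, map_smul]
    exact smul_mem _ _ hu1

theorem injective_comp_inv_of_not_forall_apply_two_eq {k N : Type*} [Group N]
    {φ : Multiplicative (ZMod 4) →* MulAut N} {χ : N → k} (hχ : ¬ ∀ n, χ (φ (ofAdd 2) n) = χ n) :
    Function.Injective fun g n => χ ((φ g)⁻¹ n) := by
  intro g h hgh
  by_contra hne
  have hstab : ∀ n, χ (φ (g⁻¹ * h) n) = χ n := fun n => by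
    simpa [map_mul, map_inv] using congrFun hgh (φ h n)
  have hgen : ∀ d : Multiplicative (ZMod 4), d ≠ 1 → d = ofAdd 2 ∨ d * d = ofAdd 2 := by
    decide
  refine hχ ?_
  rcases hgen (g⁻¹ * h) fun h1 => hne (inv_mul_eq_one.mp h1) with hd | hd
  · exact hd ▸ hstab
  · intro n
    rw [← hd, map_mul, MulAut.mul_apply, hstab, hstab]

end ZMod4

def Representation.ofLinearIsometryEquiv {R E G : Type*} [CommSemiring R]
    [SeminormedAddCommGroup E] [Module R E] [Monoid G] (ρ : G →* (E ≃ₗᵢ[R] E)) :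
    Representation R G E where
  toFun g := ((ρ g).toLinearEquiv : E →ₗ[R] E)
  map_one' := by ext; simp
  map_mul' g h := by ext; simp

open Multiplicative SemidirectProduct Representation

/-- Every irreducible unitary representation of `H = ℤ² ⋊ ℤ/4` on a nonzero
finite-dimensional complex inner product space has dimension `1`, `2`, or `4`. -/
theorem Hgroup_irreducible_dim (W : Type)
    [NormedAddCommGroup W] [InnerProductSpace ℂ W] [FiniteDimensional ℂ W]
    (ρ : Hgroup →* (W ≃ₗᵢ[ℂ] W))
    (hW : 0 < Module.finrank ℂ W)
    (hirr : ∀ p : Submodule ℂ W,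
        (∀ g : Hgroup, p.map ((ρ g).toLinearEquiv : W →ₗ[ℂ] W) ≤ p) →
          p = ⊥ ∨ p = ⊤) :
    Module.finrank ℂ W = 1 ∨ Module.finrank ℂ W = 2 ∨ Module.finrank ℂ W = 4 := by
  have : Nontrivial W := Module.finrank_pos_iff.mp hW
  let π : Representation ℂ (Multiplicative (ℤ × ℤ) ⋊[rotAction] Multiplicative (ZMod 4)) W :=
    ofLinearIsometryEquiv ρ
  have orbit_eq_top {χ v} (hv : v ∈ π.inlWeightSpace χ) (hv0 : v ≠ 0) :
      π.inrOrbitSpan v = ⊤ :=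
    (hirr _ fun g => map_le_iff_le_comap.mpr (inrOrbitSpan_le_comap hv g)).resolve_left
      ((Submodule.ne_bot_iff _).mpr ⟨v, self_mem_inrOrbitSpan v, hv0⟩)
  obtain ⟨χ, hχ⟩ := π.exists_inlWeightSpace_ne_bot
  by_cases hstab : ∀ n, χ (rotAction (ofAdd 2) n) = χ n
  · obtain ⟨c, u, hu, hu0, hcu⟩ :=
      Module.End.exists_eigenvector_mem_of_mapsTo (π (inr (ofAdd 2))) hχ
        fun _ => inr_apply_mem_inlWeightSpace_of_forall_eq hstab
    have hle : finrank ℂ (π.inrOrbitSpan u) ≤ 2 := calc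
      _ ≤ finrank ℂ (span ℂ (Set.range ![u, π (inr (ofAdd 1)) u])) :=
        Submodule.finrank_mono <| span_le.mpr <| Set.range_subset_iff.mpr
          (apply_mem_span_pair_of_apply_two_eq_smul (π.comp inr) hcu)
      _ ≤ 2 := (finrank_range_le_card _).trans_eq (Fintype.card_fin 2)
    rw [orbit_eq_top hu hu0, finrank_top] at hle
    omega
  · obtain ⟨v, hv, hv0⟩ := exists_mem_ne_zero_of_ne_bot hχ
    have hge := (linearIndependent_inr_apply hv hv0
      (injective_comp_inv_of_not_forall_apply_two_eq hstab)).fintype_card_le_finrank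
    have hle : finrank ℂ (π.inrOrbitSpan v) ≤ _ := finrank_range_le_card _
    rw [orbit_eq_top hv hv0, finrank_top] at hle
    simp only [Fintype.card_multiplicative, ZMod.card] at hge hle
    omega
end

section
/- If y and y' are elements of π₁((S¹)^k, (1,…,1)) such that for some n ≥ 1 their images in π₁(X(n, k), e_n) under the map induced by ι_n : (S¹)^k → X(n, k) coincide, then y = y'. -/
/-!
The determinant is invariant under conjugation, so taking determinants coordinatewise gives a
continuous map `X(n, k) → (S¹)^k`. For `n ≥ 1` we have `det diag(z, 1, …, 1) = z`, so this map
is a left inverse of `ι_n`; composing a homotopy between the images of two loops with it gives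
a homotopy between the loops themselves.
-/

/-- The relation of simultaneous conjugation on `k`-tuples of elements of `U(n)`:
`(B'_1, …, B'_k) = (A B_1 A⁻¹, …, A B_k A⁻¹)` for some `A ∈ U(n)`. -/
def simConjRel (n k : ℕ)
    (B B' : Fin k → Matrix.unitaryGroup (Fin n) ℂ) : Prop :=
  ∃ A : Matrix.unitaryGroup (Fin n) ℂ, ∀ i, B' i = A * B i * A⁻¹

/-- The space `X(n, k) = U(n)^k / U(n)`, the quotient of the `k`-fold product of
`U(n)` by simultaneous conjugation, with the quotient topology. -/
def XSpace (n k : ℕ) : Type :=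
  Quot (simConjRel n k)

instance (n k : ℕ) : TopologicalSpace (XSpace n k) :=
  inferInstanceAs (TopologicalSpace (Quot (simConjRel n k)))

/-- The basepoint `e_n ∈ X(n, k)`: the class of the tuple of identity matrices. -/
def basePoint (n k : ℕ) : XSpace n k :=
  Quot.mk _ (fun _ => 1)

/-- The block-diagonal enlargement of an `n × n` matrix to an `m × m` matrix, with
blocks `M` and the identity:  the entry at `(i, j)` is `M i j` in the upper-left
corner, and otherwise is an identity-matrix entry. -/
def embDiag {n : ℕ} (m : ℕ) (M : Matrix (Fin n) (Fin n) ℂ) : Matrix (Fin m) (Fin m) ℂ :=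
  Matrix.of fun i j =>
    if h : (i : ℕ) < n ∧ (j : ℕ) < n then M ⟨i, h.1⟩ ⟨j, h.2⟩
    else if (i : ℕ) = (j : ℕ) then 1 else 0

/-- `σ : X(n, k) → X(m, k)` is the stabilization map: it sends the class of
`(B_1, …, B_k)` to the class of `(B_1 ⊕ 1, …, B_k ⊕ 1)`. -/
def IsStabilizationMap (n m k : ℕ) (σ : C(XSpace n k, XSpace m k)) : Prop :=
  ∀ (B : Fin k → Matrix.unitaryGroup (Fin n) ℂ)
    (B' : Fin k → Matrix.unitaryGroup (Fin m) ℂ),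
    (∀ i, (B' i : Matrix (Fin m) (Fin m) ℂ) = embDiag m (B i : Matrix (Fin n) (Fin n) ℂ)) →
      σ (Quot.mk _ B) = Quot.mk _ B'

/-- `ι : (S¹)^k → X(n, k)` is the map sending `(z_1, …, z_k)` to the class of the
tuple of diagonal matrices `diag(z_i, 1, …, 1)`. -/
def IsIotaMap (n k : ℕ) (ι : C((Fin k → Circle), XSpace n k)) : Prop :=
  ∀ (z : Fin k → Circle) (B : Fin k → Matrix.unitaryGroup (Fin n) ℂ),
    (∀ i, (B i : Matrix (Fin n) (Fin n) ℂ) =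
        Matrix.diagonal (fun (j : Fin n) => if (j : ℕ) = 0 then (z i : ℂ) else 1)) →
      ι z = Quot.mk _ B

open Matrix

theorem ContinuousMap.HomotopicRel.of_comp_leftInverse {X Y Z : Type*} [TopologicalSpace X]
    [TopologicalSpace Y] [TopologicalSpace Z] {S : Set X} {f : C(Y, Z)} {g : C(Z, Y)}
    (hgf : Function.LeftInverse g f) {δ δ' : C(X, Y)}
    (h : (f.comp δ).HomotopicRel (f.comp δ') S) : δ.HomotopicRel δ' S := by
  have hid : g.comp f = ContinuousMap.id Y := ContinuousMap.ext hgf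
  simpa only [← ContinuousMap.comp_assoc, hid, ContinuousMap.id_comp] using
    h.comp_continuousMap g

theorem Matrix.diagonal_mem_unitaryGroup {n α : Type*} [Fintype n] [DecidableEq n] [CommRing α]
    [StarRing α] {d : n → α} (hd : ∀ i, d i ∈ unitary α) :
    diagonal d ∈ unitaryGroup n α := by
  rw [mem_unitaryGroup_iff', star_eq_conjTranspose, diagonal_conjTranspose,
    diagonal_mul_diagonal, ← diagonal_one]
  exact congrArg diagonal (funext fun i => (hd i).1)

theorem Circle.coe_mem_unitary (z : Circle) : (z : ℂ) ∈ unitary ℂ := by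
  rw [Unitary.mem_iff_star_mul_self, Complex.star_def, Complex.conj_mul', Circle.norm_coe]
  norm_num

section UnitaryDet

variable {n : Type*} [Fintype n] [DecidableEq n]

noncomputable def Matrix.UnitaryGroup.detCircle : unitaryGroup n ℂ →* Circle :=
  (detMonoidHom.comp (unitaryGroup n ℂ).subtype).codRestrict (Submonoid.unitSphere ℂ)
    fun A => mem_sphere_zero_iff_norm.2 (CStarRing.norm_of_mem_unitary (det_of_mem_unitary A.2))

@[simp]
theorem Matrix.UnitaryGroup.coe_detCircle (A : unitaryGroup n ℂ) :
    (detCircle A : ℂ) = (A : Matrix n n ℂ).det :=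
  rfl

theorem Matrix.UnitaryGroup.continuous_detCircle :
    Continuous (detCircle : unitaryGroup n ℂ → Circle) :=
  (continuous_subtype_val.matrix_det).subtype_mk _

theorem Matrix.UnitaryGroup.detCircle_conj (A B : unitaryGroup n ℂ) :
    detCircle (A * B * A⁻¹) = detCircle B := by
  rw [map_mul, map_mul, map_inv, mul_inv_cancel_comm]

end UnitaryDet

noncomputable def XSpace.det (n k : ℕ) : C(XSpace n k, Fin k → Circle) where
  toFun := Quot.lift (fun B i => UnitaryGroup.detCircle (B i)) <| by
    rintro B B' ⟨A, hA⟩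
    funext i
    rw [hA i, UnitaryGroup.detCircle_conj]
  continuous_toFun := continuous_quot_lift _ <|
    continuous_pi fun i => UnitaryGroup.continuous_detCircle.comp (continuous_apply i)

noncomputable def diagUnitary {n : ℕ} (z : Circle) : unitaryGroup (Fin n) ℂ :=
  ⟨diagonal fun j => if (j : ℕ) = 0 then (z : ℂ) else 1,
    diagonal_mem_unitaryGroup fun j => by
      split_ifs
      exacts [z.coe_mem_unitary, (unitary ℂ).one_mem]⟩

theorem detCircle_diagUnitary {n : ℕ} (hn : 1 ≤ n) (z : Circle) :
    UnitaryGroup.detCircle (diagUnitary (n := n) z) = z := by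
  obtain ⟨m, rfl⟩ := Nat.exists_eq_add_of_le' hn
  ext
  simp [diagUnitary]

theorem XSpace.det_leftInverse_of_isIotaMap {n k : ℕ} (hn : 1 ≤ n)
    {ι : C((Fin k → Circle), XSpace n k)} (hι : IsIotaMap n k ι) :
    Function.LeftInverse (XSpace.det n k) ι := fun z => by
  rw [hι z (fun i => diagUnitary (z i)) fun i => rfl]
  exact funext fun i => detCircle_diagUnitary hn (z i)

theorem iota_pi1_injective_general (k : ℕ) (n : ℕ) (hn : 1 ≤ n)
    (ι : C((Fin k → Circle), XSpace n k)) (hι : IsIotaMap n k ι)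
    (δ δ' : C(unitInterval, (Fin k → Circle)))
    (h : ContinuousMap.HomotopicRel (ι.comp δ) (ι.comp δ') {0, 1}) :
    ContinuousMap.HomotopicRel δ δ' {0, 1} :=
  h.of_comp_leftInverse (XSpace.det_leftInverse_of_isIotaMap hn hι)

/-- The map induced by `ι_n : (S¹)^k → X(n, k)` on fundamental groups is injective:
if two loops at `(1, …, 1)` in `(S¹)^k` have images under `ι_n` that are homotopic
rel endpoints, then the loops are already homotopic rel endpoints. -/
theorem iota_pi1_injective (k : ℕ) (hk : 1 ≤ k) (n : ℕ) (hn : 1 ≤ n)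
    (ι : C((Fin k → Circle), XSpace n k)) (hι : IsIotaMap n k ι)
    (δ δ' : C(unitInterval, (Fin k → Circle)))
    (hδ0 : δ 0 = 1) (hδ1 : δ 1 = 1) (hδ'0 : δ' 0 = 1) (hδ'1 : δ' 1 = 1)
    (h : ContinuousMap.HomotopicRel (ι.comp δ) (ι.comp δ') {0, 1}) :
    ContinuousMap.HomotopicRel δ δ' {0, 1} :=
  iota_pi1_injective_general k n hn ι hι δ δ' h
end
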